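/- Let A and B be symmetric positive semidefinite d×d real matrices with smallest eigenvalue of B at least C > 0 and smallest eigenvalue of A at least C > 0. If v is a unit eigenvector of A^{1/2} − B^{1/2} with eigenvalue λ, then |λ| · vᵀ(A^{1/2} + B^{1/2})v = |vᵀ(A − B)v|, and consequently |λ| ≤ ‖A − B‖₂ / (2√C), where ‖·‖₂ denotes the operator (spectral) norm. -/

import Mathlib

/-!
Write `S = A^{1/2}` and `T = B^{1/2}`. The factorization `A - B = S (S - T) + (S - T) T` and the
symmetry of `S - T` turn `vᵀ(A - B)v` into `λ · vᵀ(S + T)v`. The eigenvalues of `S` and `T` are at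
least `√C`, so `vᵀ(S + T)v ≥ 2√C > 0`, and `|vᵀ(A - B)v| ≤ ‖A - B‖₂` for a unit vector `v`.
-/

open Matrix
open scoped Matrix.Norms.L2Operator

open scoped ComplexOrder in
/-- The positive semidefinite square root of a positive semidefinite matrix
(the definition removed from Mathlib, restored with its old meaning). -/
noncomputable def Matrix.PosSemidef.sqrt {n : Type*} [Fintype n] [DecidableEq n]
    {𝕜 : Type*} [RCLike 𝕜] {A : Matrix n n 𝕜} (hA : A.PosSemidef) : Matrix n n 𝕜 :=
  hA.1.eigenvectorUnitary.1 * diagonal ((↑) ∘ (√·) ∘ hA.1.eigenvalues) *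
    (star hA.1.eigenvectorUnitary : Matrix n n 𝕜)

namespace Matrix.PosSemidef

variable {n : Type*} [Fintype n] [DecidableEq n] {A : Matrix n n ℝ} (hA : A.PosSemidef)

theorem sqrt_eq : hA.sqrt = hA.1.eigenvectorUnitary.1 *
    diagonal (fun i => √(hA.1.eigenvalues i)) * star hA.1.eigenvectorUnitary.1 := rfl

theorem posSemidef_sqrt : hA.sqrt.PosSemidef := by
  rw [hA.sqrt_eq]
  exact (posSemidef_diagonal_iff.mpr fun i => Real.sqrt_nonneg _).mul_mul_conjTranspose_same _

theorem sqrt_mul_self : hA.sqrt * hA.sqrt = A := by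
  set U : Matrix n n ℝ := hA.1.eigenvectorUnitary.1
  have hUU : star U * U = 1 := Unitary.star_mul_self_of_mem hA.1.eigenvectorUnitary.2
  conv_rhs => rw [hA.1.spectral_theorem, Unitary.conjStarAlgAut_apply]
  calc hA.sqrt * hA.sqrt
      = U * (diagonal (fun i => √(hA.1.eigenvalues i)) * (star U * U) *
          diagonal (fun i => √(hA.1.eigenvalues i))) * star U := by
        simp only [hA.sqrt_eq, U, mul_assoc]
    _ = _ := by
      rw [hUU, mul_one, diagonal_mul_diagonal]
      congr 3
      funext i
      simp [Real.mul_self_sqrt (hA.eigenvalues_nonneg i)]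

theorem posSemidef_sqrt_sub_smul_one {c : ℝ} (hc : ∀ i, c ≤ hA.1.eigenvalues i) :
    (hA.sqrt - √c • (1 : Matrix n n ℝ)).PosSemidef := by
  set U : Matrix n n ℝ := hA.1.eigenvectorUnitary.1
  have hUU : U * star U = 1 := mem_unitaryGroup_iff.mp hA.1.eigenvectorUnitary.2
  have hdiag : hA.sqrt - √c • (1 : Matrix n n ℝ) =
      U * diagonal (fun i => √(hA.1.eigenvalues i) - √c) * star U := by
    have hscalar : √c • (1 : Matrix n n ℝ) = U * diagonal (fun _ => √c) * star U := by
      rw [← smul_one_eq_diagonal, mul_smul_comm, smul_mul_assoc, mul_one, hUU]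
    rw [hscalar, hA.sqrt_eq, ← sub_mul, ← mul_sub, diagonal_sub]
  rw [hdiag]
  exact (posSemidef_diagonal_iff.mpr fun i =>
    sub_nonneg.mpr (Real.sqrt_le_sqrt (hc i))).mul_mul_conjTranspose_same U

theorem sqrt_mul_dotProduct_self_le {c : ℝ} (hc : ∀ i, c ≤ hA.1.eigenvalues i) (v : n → ℝ) :
    √c * (v ⬝ᵥ v) ≤ v ⬝ᵥ hA.sqrt *ᵥ v := by
  have := (hA.posSemidef_sqrt_sub_smul_one hc).dotProduct_mulVec_nonneg v
  rwa [star_trivial, sub_mulVec, dotProduct_sub, smul_mulVec, one_mulVec, dotProduct_smul,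
    smul_eq_mul, sub_nonneg] at this

end Matrix.PosSemidef

theorem Matrix.dotProduct_mulVec_mul_self_sub_mul_self {n R : Type*} [Fintype n] [CommRing R]
    {S T : Matrix n n R} (hS : S.IsSymm) (hT : T.IsSymm) {v : n → R} {lam : R}
    (hv : (S - T) *ᵥ v = lam • v) :
    v ⬝ᵥ (S * S - T * T) *ᵥ v = lam * (v ⬝ᵥ (S + T) *ᵥ v) := by
  have hsplit : S * S - T * T = S * (S - T) + (S - T) * T := by noncomm_ring
  have hST : (S - T)ᵀ = S - T := (hS.sub hT).eq
  have hleft : v ⬝ᵥ (S * (S - T)) *ᵥ v = lam * (v ⬝ᵥ S *ᵥ v) := by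
    rw [← mulVec_mulVec, hv, mulVec_smul, dotProduct_smul, smul_eq_mul]
  have hright : v ⬝ᵥ ((S - T) * T) *ᵥ v = lam * (v ⬝ᵥ T *ᵥ v) := by
    rw [← mulVec_mulVec, dotProduct_mulVec, ← mulVec_transpose, hST, hv, smul_dotProduct,
      smul_eq_mul, dotProduct_mulVec, ← mulVec_transpose, hT.eq]
  rw [hsplit, add_mulVec, dotProduct_add, hleft, hright, add_mulVec, dotProduct_add, mul_add]

theorem EuclideanSpace.dotProduct_self {n : Type*} [Fintype n] (v : EuclideanSpace ℝ n) :
    v.ofLp ⬝ᵥ v.ofLp = ‖v‖ ^ 2 := by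
  rw [← real_inner_self_eq_norm_sq, EuclideanSpace.inner_eq_star_dotProduct, star_trivial]

theorem Matrix.abs_dotProduct_mulVec_le {n : Type*} [Fintype n] [DecidableEq n]
    (M : Matrix n n ℝ) (v : EuclideanSpace ℝ n) :
    |v.ofLp ⬝ᵥ M *ᵥ v.ofLp| ≤ ‖M‖ * ‖v‖ ^ 2 := by
  have hinner : v.ofLp ⬝ᵥ M *ᵥ v.ofLp = inner ℝ v (toEuclideanCLM (𝕜 := ℝ) M v) := by
    rw [EuclideanSpace.inner_eq_star_dotProduct, star_trivial, ofLp_toEuclideanCLM,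
      dotProduct_comm]
  calc |v.ofLp ⬝ᵥ M *ᵥ v.ofLp| ≤ ‖v‖ * ‖toEuclideanCLM (𝕜 := ℝ) M v‖ := by
        rw [hinner]; exact abs_real_inner_le_norm _ _
    _ ≤ ‖v‖ * (‖M‖ * ‖v‖) := by gcongr; exact (toEuclideanCLM (𝕜 := ℝ) M).le_opNorm v
    _ = ‖M‖ * ‖v‖ ^ 2 := by ring

/-- If `v` is a unit eigenvector of `A^{1/2} - B^{1/2}` with eigenvalue `λ`, then
`|λ| · vᵀ(A^{1/2}+B^{1/2})v = |vᵀ(A-B)v|` and `|λ| ≤ ‖A - B‖₂ / (2√C)`. -/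
theorem stmt_0 (d : ℕ) (A B : Matrix (Fin d) (Fin d) ℝ)
    (hA : A.PosSemidef) (hB : B.PosSemidef) (C : ℝ) (hC : 0 < C)
    (hAev : ∀ i, C ≤ hA.1.eigenvalues i) (hBev : ∀ i, C ≤ hB.1.eigenvalues i)
    (v : EuclideanSpace ℝ (Fin d)) (hv : ‖v‖ = 1) (lam : ℝ)
    (heig : (hA.sqrt - hB.sqrt).mulVec v = lam • (v : Fin d → ℝ)) :
    |lam| * ((v : Fin d → ℝ) ⬝ᵥ (hA.sqrt + hB.sqrt).mulVec v)
      = |(v : Fin d → ℝ) ⬝ᵥ (A - B).mulVec v| ∧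
    |lam| ≤ ‖A - B‖ / (2 * Real.sqrt C) := by
  set x : Fin d → ℝ := v.ofLp
  have hxx : x ⬝ᵥ x = 1 := by rw [EuclideanSpace.dotProduct_self, hv, one_pow]
  have hkey : x ⬝ᵥ (A - B) *ᵥ x = lam * (x ⬝ᵥ (hA.sqrt + hB.sqrt) *ᵥ x) := by
    rw [← dotProduct_mulVec_mul_self_sub_mul_self (isHermitian_iff_isSymm.mp hA.posSemidef_sqrt.1)
      (isHermitian_iff_isSymm.mp hB.posSemidef_sqrt.1) heig, hA.sqrt_mul_self, hB.sqrt_mul_self]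
  have hsum : 2 * √C ≤ x ⬝ᵥ (hA.sqrt + hB.sqrt) *ᵥ x := by
    have hAx := hA.sqrt_mul_dotProduct_self_le hAev x
    have hBx := hB.sqrt_mul_dotProduct_self_le hBev x
    rw [hxx, mul_one] at hAx hBx
    rw [add_mulVec, dotProduct_add]
    linarith
  have heq : |lam| * (x ⬝ᵥ (hA.sqrt + hB.sqrt) *ᵥ x) = |x ⬝ᵥ (A - B) *ᵥ x| := by
    rw [hkey, abs_mul, abs_of_nonneg (le_trans (by positivity) hsum)]
  refine ⟨heq, (le_div_iff₀ (by positivity)).mpr ?_⟩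
  calc |lam| * (2 * √C) ≤ |lam| * (x ⬝ᵥ (hA.sqrt + hB.sqrt) *ᵥ x) := by gcongr
    _ = |x ⬝ᵥ (A - B) *ᵥ x| := heq
    _ ≤ ‖A - B‖ := by simpa [hv] using abs_dotProduct_mulVec_le (A - B) v
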